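/- Let G be a group generated by a finite symmetric set S with word length ℓ, and let H ⊴ G be a normal subgroup, so Q = G/H is a group generated by the image of S, with word length ℓ_Q. Then the pair (G,H) has the rapid decay property if and only if the quotient group Q has the rapid decay property. -/

import Mathlib

open scoped BigOperators

attribute [local instance] Classical.propDecidable

section Defs

variable {G : Type*} [Group G]

/-- Word length with respect to a generating set `S`. -/
noncomputable def wordLength (S : Set G) (x : G) : ℕ :=
  sInf {n | ∃ l : List G, (∀ s ∈ l, s ∈ S) ∧ l.length = n ∧ l.prod = x}

/-- Convolution of finitely supported functions:
`(f * ϕ) x = ∑ z, f z * ϕ (z⁻¹ * x)`. -/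
noncomputable def conv {k : Type*} [Semiring k] (f ϕ : G →₀ k) : G →₀ k :=
  f.sum fun z c => c • Finsupp.mapDomain (fun x => z * x) ϕ

/-- `n`-fold convolution power. -/
noncomputable def convPow {k : Type*} [Semiring k] (f : G →₀ k) : ℕ → G →₀ k
  | 0 => Finsupp.single 1 1
  | n + 1 => conv f (convPow f n)

/-- ℓ² norm of a finitely supported function. -/
noncomputable def l2Norm {α k : Type*} [NormedAddCommGroup k] (f : α →₀ k) : ℝ :=
  Real.sqrt (∑ x ∈ f.support, ‖f x‖ ^ 2)

/-- ℓ¹ norm of a finitely supported function. -/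
noncomputable def l1Norm {α k : Type*} [NormedAddCommGroup k] (f : α →₀ k) : ℝ :=
  ∑ x ∈ f.support, ‖f x‖

/-- The hybrid `(2,1)` norm with respect to the subgroup `H`:
`‖f‖_{(2,1)} = sqrt (∑_{gH ∈ G/H} (∑_{x ∈ gH} |f x|)²)`. -/
noncomputable def l21Norm (H : Subgroup G) {k : Type*} [NormedAddCommGroup k]
    (f : G →₀ k) : ℝ :=
  l2Norm (Finsupp.mapDomain (QuotientGroup.mk : G → G ⧸ H) (f.mapRange norm norm_zero))

/-- Hybrid operator norm `‖f‖_h`. -/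
noncomputable def hybridOpNorm (H : Subgroup G) (f : G →₀ ℂ) : ℝ :=
  sSup {c : ℝ | ∃ ϕ : G →₀ ℂ, l21Norm H ϕ ≤ 1 ∧ c = l21Norm H (conv f ϕ)}

/-- Regular operator norm `‖f‖_*`. -/
noncomputable def regOpNorm (f : G →₀ ℂ) : ℝ :=
  sSup {c : ℝ | ∃ ξ : G →₀ ℂ, l2Norm ξ ≤ 1 ∧ c = l2Norm (conv f ξ)}

/-- The quasi-regular representation:
`(λ_{G/H}(f) ξ)(gH) = ∑ z, f z * ξ (z⁻¹ g H)`. -/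
noncomputable def quasiReg (H : Subgroup G) (f : G →₀ ℂ) (ξ : (G ⧸ H) →₀ ℂ) :
    (G ⧸ H) →₀ ℂ :=
  f.sum fun z c => c • Finsupp.mapDomain (fun q => z • q) ξ

/-- Quasi-regular operator norm `‖λ_{G/H}(f)‖`. -/
noncomputable def quasiRegOpNorm (H : Subgroup G) (f : G →₀ ℂ) : ℝ :=
  sSup {c : ℝ | ∃ ξ : (G ⧸ H) →₀ ℂ, l2Norm ξ ≤ 1 ∧ c = l2Norm (quasiReg H f ξ)}

/-- Embed a real finitely supported function into the complex valued ones. -/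
noncomputable def toC {α : Type*} (f : α →₀ ℝ) : α →₀ ℂ :=
  f.mapRange Complex.ofReal Complex.ofReal_zero

/-- Pointwise weight of a function by `(1 + ℓ)^s`. -/
noncomputable def weight (S : Set G) (s : ℝ) (f : G →₀ ℂ) : G →₀ ℂ where
  support := f.support
  toFun x := ((((1 : ℝ) + (wordLength S x : ℝ)) ^ s : ℝ) : ℂ) * f x
  mem_support_toFun x := by
    simp only [Finsupp.mem_support_iff]
    have hpos : (0 : ℝ) < ((1 : ℝ) + (wordLength S x : ℝ)) ^ s :=
      Real.rpow_pos_of_pos (by positivity) s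
    constructor
    · intro hf h
      rcases mul_eq_zero.mp h with h1 | h2
      · exact hpos.ne' (by exact_mod_cast h1)
      · exact hf h2
    · intro h hf
      exact h (by rw [hf, mul_zero])

/-- The involution `f⋆ x = f x⁻¹`. -/
noncomputable def starFun {k : Type*} [Zero k] (f : G →₀ k) : G →₀ k :=
  Finsupp.equivMapDomain (Equiv.inv G) f

/-- Sum of the values of `g` over the subgroup `H`. -/
noncomputable def sumOverSubgroup (H : Subgroup G) (g : G →₀ ℝ) : ℝ :=
  ∑ x ∈ g.support.filter (fun x => x ∈ H), g x

/-- `f` is supported in the ball of radius `R` for the word length of `S`. -/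
def supportedInBall (S : Set G) (R : ℕ) {k : Type*} [Zero k] (f : G →₀ k) : Prop :=
  ∀ x ∈ f.support, wordLength S x ≤ R

/-- Rapid decay property for the pair `(G, H)`. -/
def PairRD (S : Set G) (H : Subgroup G) : Prop :=
  ∃ C : ℝ, ∃ D : ℕ, 0 ≤ C ∧ ∀ (R : ℕ) (f ϕ : G →₀ ℂ), supportedInBall S R f →
    l21Norm H (conv f ϕ) ≤ C * ((R : ℝ) + 1) ^ D * l21Norm H f * l21Norm H ϕ

/-- Rapid decay property for the group `G`. -/
def GroupRD (S : Set G) : Prop :=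
  ∃ C : ℝ, ∃ D : ℕ, 0 ≤ C ∧ ∀ (R : ℕ) (f ϕ : G →₀ ℂ), supportedInBall S R f →
    l2Norm (conv f ϕ) ≤ C * ((R : ℝ) + 1) ^ D * l2Norm f * l2Norm ϕ

/-- Polynomial growth of a subgroup for the induced length. -/
def polyGrowthSubgroup (S : Set G) (H : Subgroup G) : Prop :=
  ∃ C : ℝ, ∃ D : ℕ, 0 ≤ C ∧ ∀ R : ℕ,
    (Set.ncard {x : G | x ∈ H ∧ wordLength S x ≤ R} : ℝ) ≤ C * ((R : ℝ) + 1) ^ D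

/-- Polynomial growth of the coset space `G/H`. -/
def polyGrowthQuotient (S : Set G) (H : Subgroup G) : Prop :=
  ∃ C : ℝ, ∃ D : ℕ, 0 ≤ C ∧ ∀ R : ℕ,
    (Set.ncard ((QuotientGroup.mk : G → G ⧸ H) '' {x : G | wordLength S x ≤ R}) : ℝ) ≤
      C * ((R : ℝ) + 1) ^ D

/-- Co-amenability of `H` in `G`: Følner condition for the left action on `G/H`. -/
def Coamenable (H : Subgroup G) : Prop :=
  ∀ ε : ℝ, 0 < ε → ∀ F : Finset G, ∃ V : Finset (G ⧸ H), V.Nonempty ∧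
    ((symmDiff (Finset.image₂ (· • ·) F V) V).card : ℝ) ≤ ε * (V.card : ℝ)

/-- Matrix coefficient `⟨λ_{G/H}(γ) ξ, η⟩` of the quasi-regular representation
on `ℓ²(G/H)`. -/
noncomputable def qrCoeff (H : Subgroup G) (γ : G)
    (ξ η : lp (fun _ : G ⧸ H => ℂ) 2) : ℂ :=
  ∑' q : G ⧸ H, ξ (γ⁻¹ • q) * (starRingEnd ℂ) (η q)

/-- The spectral radius of the random walk induced on `G/H`:
`ρ = limsup P_{2n}(H,H)^{1/(2n)}`. -/
noncomputable def specRadQuot (H : Subgroup G) (μ : G →₀ ℝ) : ℝ :=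
  Filter.limsup (fun n : ℕ =>
    (sumOverSubgroup H (convPow μ (2 * n))) ^ ((1 : ℝ) / (2 * (n : ℝ)))) Filter.atTop

end Defs

/-!
Both directions compare convolution on `G` with convolution on `Q = G ⧸ H` through the
pushforward `π_*`, which is multiplicative because `π` is a homomorphism. Pushing `|f|`
forward gives a function on `Q` whose `ℓ²` norm is `‖f‖_{(2,1)}`, and `|f * ϕ| ≤ |f| * |ϕ|`,
so rapid decay of `Q` gives that of `(G, H)`, since `ℓ_Q(π x) ≤ ℓ(x)`. Conversely, lifting
functions on `Q` along a section of `π` that does not increase word length is isometric from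
`ℓ²` to the `(2,1)` norm and commutes with convolution after pushing forward, while
`‖π_* g‖₂ ≤ ‖g‖_{(2,1)}`.
-/

section WordLength

variable {G K : Type*} [Group G] [Group K] {S : Set G}

theorem Submonoid.closure_eq_top_of_inv_mem (hsym : ∀ s ∈ S, s⁻¹ ∈ S)
    (hgen : Subgroup.closure S = ⊤) : Submonoid.closure S = ⊤ := by
  have hinv : S⁻¹ ⊆ S := fun s hs => by simpa using hsym _ hs
  have h : Submonoid.closure (S ∪ S⁻¹) = ⊤ := by
    rw [← Subgroup.closure_toSubmonoid, hgen]
    rfl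
  rwa [Set.union_eq_left.2 hinv] at h

theorem wordLength_list_prod_le_length (l : List G) (hl : ∀ s ∈ l, s ∈ S) :
    wordLength S l.prod ≤ l.length :=
  Nat.sInf_le ⟨l, hl, rfl, rfl⟩

theorem exists_list_length_eq_wordLength {x : G} (hx : x ∈ Submonoid.closure S) :
    ∃ l : List G, (∀ s ∈ l, s ∈ S) ∧ l.length = wordLength S x ∧ l.prod = x := by
  obtain ⟨l, hl, rfl⟩ := Submonoid.exists_list_of_mem_closure hx
  exact Nat.sInf_mem
    (s := {n | ∃ l' : List G, (∀ s ∈ l', s ∈ S) ∧ l'.length = n ∧ l'.prod = l.prod})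
    ⟨_, l, hl, rfl, rfl⟩

theorem wordLength_eq_zero_of_notMem_closure {x : G} (hx : x ∉ Submonoid.closure S) :
    wordLength S x = 0 := by
  refine Nat.sInf_eq_zero.2 (Or.inr (Set.eq_empty_of_forall_notMem ?_))
  rintro n ⟨l, hl, -, rfl⟩
  exact hx (Submonoid.list_prod_mem _ fun s hs => Submonoid.subset_closure (hl s hs))

theorem wordLength_map_le (φ : G →* K) {x : G} (hx : x ∈ Submonoid.closure S) :
    wordLength (φ '' S) (φ x) ≤ wordLength S x := by
  obtain ⟨l, hl, hlen, rfl⟩ := exists_list_length_eq_wordLength hx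
  rw [← hlen, ← List.length_map φ, map_list_prod]
  exact wordLength_list_prod_le_length _ fun t ht => by
    obtain ⟨s, hs, rfl⟩ := List.mem_map.1 ht
    exact Set.mem_image_of_mem φ (hl s hs)

theorem exists_map_eq_wordLength_le (φ : G →* K) (hφ : Function.Surjective φ) (q : K) :
    ∃ x, φ x = q ∧ wordLength S x ≤ wordLength (φ '' S) q := by
  by_cases hq : q ∈ Submonoid.closure (φ '' S)
  · obtain ⟨l, hl, hlen, rfl⟩ := exists_list_length_eq_wordLength hq
    -- lift the word letter by letter, through `φ` restricted to `S`
    have hrange : l ∈ Set.range (List.map (fun s : S => φ s)) := by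
      rw [Set.range_list_map, Set.range_comp']
      simpa using hl
    obtain ⟨w, rfl⟩ := hrange
    refine ⟨(w.map Subtype.val).prod, by simp [map_list_prod], ?_⟩
    rw [← hlen, List.length_map]
    simpa using
      wordLength_list_prod_le_length (S := S) (w.map Subtype.val) (by simp +contextual)
  · obtain ⟨x, rfl⟩ := hφ q
    refine ⟨x, rfl,
      (wordLength_eq_zero_of_notMem_closure fun hx => hq ?_).trans_le (Nat.zero_le _)⟩
    rw [← MonoidHom.map_mclosure]
    exact Submonoid.mem_map_of_mem φ hx

end WordLength

section L2Norm

open Finsupp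

variable {α β E F : Type*} [NormedAddCommGroup E] [NormedAddCommGroup F]

theorem mapDomain_apply_eq_sum_ite {M : Type*} [AddCommMonoid M] (h : α → β) (v : α →₀ M)
    (b : β) :
    mapDomain h v b = v.sum fun a c => if h a = b then c else 0 := by
  simp only [mapDomain, Finsupp.sum_apply, single_apply]

theorem mapDomain_nonneg (h : α → β) {v : α →₀ ℝ} (hv : ∀ a, 0 ≤ v a) (b : β) :
    0 ≤ mapDomain h v b := by
  rw [mapDomain_apply_eq_sum_ite]
  exact Finset.sum_nonneg fun a _ => by dsimp only; split_ifs <;> simp [hv a]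

theorem mapDomain_mono (h : α → β) {u v : α →₀ ℝ} (huv : ∀ a, u a ≤ v a) (b : β) :
    mapDomain h u b ≤ mapDomain h v b := by
  have := mapDomain_nonneg h (v := v - u) (fun a => by simpa using huv a) b
  rwa [mapDomain_sub, coe_sub, Pi.sub_apply, sub_nonneg] at this

theorem norm_mapDomain_apply_le (h : α → β) (v : α →₀ E) (b : β) :
    ‖mapDomain h v b‖ ≤ mapDomain h (v.mapRange norm norm_zero) b := by
  rw [mapDomain_apply_eq_sum_ite, mapDomain_apply_eq_sum_ite, sum_mapRange_index (by simp)]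
  refine (norm_sum_le _ _).trans_eq (Finset.sum_congr rfl fun a _ => ?_)
  dsimp only
  split_ifs <;> simp

theorem l2Norm_le_of_norm_le {p : α →₀ E} {q : α →₀ F} (h : ∀ a, ‖p a‖ ≤ ‖q a‖) :
    l2Norm p ≤ l2Norm q := by
  have hsupp : p.support ⊆ q.support := fun a ha => by
    rw [mem_support_iff, ← norm_ne_zero_iff] at ha ⊢
    exact (lt_of_lt_of_le ((norm_nonneg _).lt_of_ne' ha) (h a)).ne'
  refine Real.sqrt_le_sqrt ((Finset.sum_le_sum fun a _ => ?_).trans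
    (Finset.sum_le_sum_of_subset_of_nonneg hsupp fun _ _ _ => by positivity))
  exact pow_le_pow_left₀ (norm_nonneg _) (h a) 2

theorem l2Norm_congr {p : α →₀ E} {q : α →₀ F} (h : ∀ a, ‖p a‖ = ‖q a‖) :
    l2Norm p = l2Norm q :=
  (l2Norm_le_of_norm_le fun a => (h a).le).antisymm (l2Norm_le_of_norm_le fun a => (h a).ge)

theorem l2Norm_mapRange_norm (v : α →₀ E) : l2Norm (v.mapRange norm norm_zero) = l2Norm v :=
  l2Norm_congr fun a => by simp

theorem l2Norm_mapDomain_le (h : α → β) (v : α →₀ E) :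
    l2Norm (mapDomain h v) ≤ l2Norm (mapDomain h (v.mapRange norm norm_zero)) :=
  l2Norm_le_of_norm_le fun b => (norm_mapDomain_apply_le h v b).trans_eq
    (Real.norm_of_nonneg (mapDomain_nonneg h (fun a => by simp) b)).symm

theorem l2Norm_mapDomain_mono (h : α → β) {u v : α →₀ ℝ} (hu : ∀ a, 0 ≤ u a)
    (huv : ∀ a, u a ≤ v a) : l2Norm (mapDomain h u) ≤ l2Norm (mapDomain h v) :=
  l2Norm_le_of_norm_le fun b => by
    have hub := mapDomain_nonneg h hu b
    rw [Real.norm_of_nonneg hub, Real.norm_of_nonneg (hub.trans (mapDomain_mono h huv b))]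
    exact mapDomain_mono h huv b

theorem mapDomain_mapDomain_of_leftInverse {M : Type*} [AddCommMonoid M] {σ : β → α}
    {h : α → β} (hσ : Function.LeftInverse h σ) (ψ : β →₀ M) :
    mapDomain h (mapDomain σ ψ) = ψ := by
  rw [← mapDomain_comp, hσ.comp_eq_id, mapDomain_id]

theorem l2Norm_mapDomain_mapRange_norm_mapDomain {σ : β → α} {h : α → β}
    (hσ : Function.LeftInverse h σ) (ψ : β →₀ E) :
    l2Norm (mapDomain h ((mapDomain σ ψ).mapRange norm norm_zero)) = l2Norm ψ := by
  have hemb : mapDomain σ ψ = embDomain ⟨σ, hσ.injective⟩ ψ :=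
    (embDomain_eq_mapDomain ⟨σ, hσ.injective⟩ ψ).symm
  rw [hemb, ← embDomain_mapRange, embDomain_eq_mapDomain, Function.Embedding.coeFn_mk,
    mapDomain_mapDomain_of_leftInverse hσ, l2Norm_mapRange_norm]

end L2Norm

section Convolution

open Finsupp

variable {G K : Type*} [Group G] [Group K]

theorem conv_apply {k : Type*} [Semiring k] (f ϕ : G →₀ k) (x : G) :
    conv f ϕ x = f.sum fun z c => c * ϕ (z⁻¹ * x) := by
  unfold conv
  rw [Finsupp.sum_apply]
  refine Finsupp.sum_congr fun z _ => ?_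
  rw [Finsupp.smul_apply, smul_eq_mul, ← mapDomain_apply (mul_right_injective z) ϕ (z⁻¹ * x),
    mul_inv_cancel_left]

theorem conv_eq_coeff_mul {k : Type*} [Semiring k] (f ϕ : MonoidAlgebra k G) :
    conv f.coeff ϕ.coeff = (f * ϕ).coeff := by
  rw [MonoidAlgebra.mul_def]
  unfold conv
  rw [MonoidAlgebra.coeff_finsuppSum]
  refine Finsupp.sum_congr fun z _ => ?_
  rw [MonoidAlgebra.coeff_finsuppSum, Finsupp.mapDomain, Finsupp.smul_sum]
  refine Finsupp.sum_congr fun a _ => ?_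
  rw [Finsupp.smul_single, smul_eq_mul]
  rfl

theorem mapDomain_conv {k : Type*} [Semiring k] (φ : G →* K) (f ϕ : G →₀ k) :
    mapDomain φ (conv f ϕ) = conv (mapDomain φ f) (mapDomain φ ϕ) := by
  have h := congrArg MonoidAlgebra.coeff
    (MonoidAlgebra.mapDomain_mul φ (MonoidAlgebra.ofCoeff f) (MonoidAlgebra.ofCoeff ϕ))
  rw [← conv_eq_coeff_mul] at h
  exact (congrArg _ (conv_eq_coeff_mul (.ofCoeff f) (.ofCoeff ϕ))).trans h

theorem mapRange_conv {k k' : Type*} [Semiring k] [Semiring k'] (ρ : k →+* k')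
    (f ϕ : G →₀ k) :
    (conv f ϕ).mapRange ρ ρ.map_zero =
      conv (f.mapRange ρ ρ.map_zero) (ϕ.mapRange ρ ρ.map_zero) := by
  ext x
  rw [mapRange_apply, conv_apply, conv_apply, sum_mapRange_index (by simp), map_finsuppSum]
  simp

theorem norm_conv_apply_le {k : Type*} [NormedRing k] (f ϕ : G →₀ k) (x : G) :
    ‖conv f ϕ x‖ ≤ conv (f.mapRange norm norm_zero) (ϕ.mapRange norm norm_zero) x := by
  rw [conv_apply, conv_apply, sum_mapRange_index (by simp)]
  exact (norm_sum_le _ _).trans (Finset.sum_le_sum fun z _ => by simpa using norm_mul_le _ _)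

end Convolution

theorem toC_conv {G : Type*} [Group G] (u v : G →₀ ℝ) :
    toC (conv u v) = conv (toC u) (toC v) :=
  mapRange_conv Complex.ofRealHom u v

theorem l2Norm_toC {α : Type*} (u : α →₀ ℝ) : l2Norm (toC u) = l2Norm u :=
  l2Norm_congr fun a => by simp [toC]

section SupportedInBall

variable {G K : Type*} [Group G] [Group K] {S : Set G} {T : Set K} {R : ℕ}

theorem supportedInBall.mapRange {k k' : Type*} [Zero k] [Zero k'] {f : G →₀ k}
    (hf : supportedInBall S R f) (g : k → k') (hg : g 0 = 0) :
    supportedInBall S R (f.mapRange g hg) :=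
  fun x hx => hf x (Finsupp.support_mapRange hx)

theorem supportedInBall.mapDomain {k : Type*} [AddCommMonoid k] {f : G →₀ k}
    (hf : supportedInBall S R f) {h : G → K} (hh : ∀ x, wordLength T (h x) ≤ wordLength S x) :
    supportedInBall T R (Finsupp.mapDomain h f) := fun y hy => by
  obtain ⟨x, hx, rfl⟩ := Finset.mem_image.1 (Finsupp.mapDomain_support hy)
  exact (hh x).trans (hf x hx)

end SupportedInBall

section HybridNorm

open Finsupp QuotientGroup

variable {G : Type*} [Group G] (H : Subgroup G)

theorem l2Norm_mapDomain_mk_le_l21Norm {E : Type*} [NormedAddCommGroup E] (g : G →₀ E) :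
    l2Norm (mapDomain (QuotientGroup.mk : G → G ⧸ H) g) ≤ l21Norm H g :=
  l2Norm_mapDomain_le _ g

theorem l21Norm_mapDomain_of_leftInverse {E : Type*} [NormedAddCommGroup E] {σ : G ⧸ H → G}
    (hσ : ∀ q, (σ q : G ⧸ H) = q) (ψ : (G ⧸ H) →₀ E) :
    l21Norm H (mapDomain σ ψ) = l2Norm ψ :=
  l2Norm_mapDomain_mapRange_norm_mapDomain hσ ψ

variable [H.Normal]

theorem mapDomain_mk_conv {k : Type*} [Semiring k] (f ϕ : G →₀ k) :
    mapDomain (QuotientGroup.mk : G → G ⧸ H) (conv f ϕ) =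
      conv (mapDomain QuotientGroup.mk f) (mapDomain QuotientGroup.mk ϕ) :=
  mapDomain_conv (mk' H) f ϕ

theorem l21Norm_conv_le {k : Type*} [NormedRing k] (f ϕ : G →₀ k) :
    l21Norm H (conv f ϕ) ≤
      l2Norm (conv (mapDomain QuotientGroup.mk (f.mapRange norm norm_zero))
        (mapDomain (QuotientGroup.mk : G → G ⧸ H) (ϕ.mapRange norm norm_zero))) := by
  rw [← mapDomain_mk_conv]
  exact l2Norm_mapDomain_mono _ (fun x => norm_nonneg _) (norm_conv_apply_le f ϕ)

end HybridNorm

section RapidDecay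

open Finsupp QuotientGroup

variable {G : Type*} [Group G] {S : Set G} {H : Subgroup G} [H.Normal]

theorem PairRD.groupRD_quotient (hRD : PairRD S H) :
    GroupRD ((QuotientGroup.mk : G → G ⧸ H) '' S) := by
  obtain ⟨C, D, hC, hRD⟩ := hRD
  refine ⟨C, D, hC, fun R F Φ hF => ?_⟩
  choose σ hσ hσS using exists_map_eq_wordLength_le (S := S) (mk' H) (mk'_surjective H)
  simp only [coe_mk'] at hσ hσS
  have hconv :
      conv F Φ = mapDomain QuotientGroup.mk (conv (mapDomain σ F) (mapDomain σ Φ)) := by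
    rw [mapDomain_mk_conv, mapDomain_mapDomain_of_leftInverse hσ,
      mapDomain_mapDomain_of_leftInverse hσ]
  calc l2Norm (conv F Φ)
      ≤ l21Norm H (conv (mapDomain σ F) (mapDomain σ Φ)) :=
        hconv ▸ l2Norm_mapDomain_mk_le_l21Norm H _
    _ ≤ C * ((R : ℝ) + 1) ^ D * l21Norm H (mapDomain σ F) * l21Norm H (mapDomain σ Φ) :=
        hRD R _ _ (hF.mapDomain hσS)
    _ = C * ((R : ℝ) + 1) ^ D * l2Norm F * l2Norm Φ := by
        rw [l21Norm_mapDomain_of_leftInverse H hσ, l21Norm_mapDomain_of_leftInverse H hσ]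

theorem GroupRD.pairRD_of_quotient (hS : Submonoid.closure S = ⊤)
    (hRD : GroupRD ((QuotientGroup.mk : G → G ⧸ H) '' S)) : PairRD S H := by
  obtain ⟨C, D, hC, hRD⟩ := hRD
  refine ⟨C, D, hC, fun R f ϕ hf => ?_⟩
  set F := mapDomain (QuotientGroup.mk : G → G ⧸ H) (f.mapRange norm norm_zero)
  set Φ := mapDomain (QuotientGroup.mk : G → G ⧸ H) (ϕ.mapRange norm norm_zero)
  have hF : supportedInBall ((QuotientGroup.mk : G → G ⧸ H) '' S) R (toC F) :=
    ((hf.mapRange norm norm_zero).mapDomain fun x =>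
      wordLength_map_le (mk' H) (hS ▸ Submonoid.mem_top x)).mapRange _ _
  calc l21Norm H (conv f ϕ)
      ≤ l2Norm (conv F Φ) := l21Norm_conv_le H f ϕ
    _ = l2Norm (conv (toC F) (toC Φ)) := by rw [← toC_conv, l2Norm_toC]
    _ ≤ C * ((R : ℝ) + 1) ^ D * l2Norm (toC F) * l2Norm (toC Φ) := hRD R _ _ hF
    _ = C * ((R : ℝ) + 1) ^ D * l21Norm H f * l21Norm H ϕ := by
        rw [l2Norm_toC, l2Norm_toC]
        rfl

end RapidDecay

theorem statement9_general {G : Type*} [Group G] (S : Set G)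
    (hsym : ∀ s ∈ S, s⁻¹ ∈ S) (hgen : Subgroup.closure S = ⊤)
    (H : Subgroup G) [H.Normal] :
    PairRD S H ↔ GroupRD ((QuotientGroup.mk : G → G ⧸ H) '' S) :=
  ⟨PairRD.groupRD_quotient,
    GroupRD.pairRD_of_quotient (Submonoid.closure_eq_top_of_inv_mem hsym hgen)⟩

/-- for a normal subgroup `H ⊴ G`, the pair `(G,H)` has rapid
decay iff the quotient group `Q = G/H` (with the generating set `π(S)`) has
rapid decay. -/
theorem statement9 {G : Type*} [Group G] (S : Set G) (hfin : S.Finite)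
    (hsym : ∀ s ∈ S, s⁻¹ ∈ S) (hgen : Subgroup.closure S = ⊤)
    (H : Subgroup G) [H.Normal] :
    PairRD S H ↔ GroupRD ((QuotientGroup.mk : G → G ⧸ H) '' S) :=
  statement9_general S hsym hgen H
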